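/- Let 𝔞 be a monomial ideal generated in degree two (so A = S/𝔞 is Koszul). Then any subset I of the minimal generators appearing in the minimal free S-resolution of 𝔞 (i.e., not matched by a standard matching) with cl(I) = 1 satisfies deg(lcm(I)) = |I| + 1. Consequently cl(I) + |I| = deg(lcm(I)) for all unmatched I, and hence Hilb_R(x, t, -1) = Hilb_R(x, 1, -t). -/

import Mathlib

/-! Common framework: multigraded minimal free resolutions, Poincaré–Betti
series, and the Golod property, for `A = S/𝔞` with `S = k[x_1,…,x_v]`. -/

set_option synthInstance.maxHeartbeats 1000000
set_option maxHeartbeats 1000000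
noncomputable section
open MvPolynomial

abbrev Mon (v : ℕ) := Fin v →₀ ℕ
abbrev PolyS (k : Type) [Field k] (v : ℕ) := MvPolynomial (Fin v) k

/-- The multigraded free module over `A` with `b α` generators in multidegree `α`. -/
abbrev FreeMod (v : ℕ) (A : Type) [CommRing A] (b : Mon v → ℕ) :=
  {p : Mon v × ℕ // p.2 < b p.1} →₀ A

variable (k : Type) [Field k] (v : ℕ)

/-- A map of multigraded free `A`-modules (`A = S/𝔞`) is graded and minimal:
the coefficient of the map at a pair of basis elements of multidegrees `β, β'`
is a scalar multiple of (the class of) the monomial `x^{β - β'}`, with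
`β - β' ≠ 0`. -/
def IsGradedMinimalMapQ (𝔞 : Ideal (PolyS k v)) {b b' : Mon v → ℕ}
    (d : FreeMod v (PolyS k v ⧸ 𝔞) b' →ₗ[PolyS k v ⧸ 𝔞] FreeMod v (PolyS k v ⧸ 𝔞) b) : Prop :=
  ∀ p q, d (Finsupp.single p 1) q ∈
    Submodule.span k {x : PolyS k v ⧸ 𝔞 | ∃ γ : Mon v, γ ≠ 0 ∧ γ + q.1.1 = p.1.1 ∧
      x = Ideal.Quotient.mk 𝔞 (monomial γ 1)}

/-- Same, for maps of multigraded free `S`-modules. -/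
def IsGradedMinimalMapS {b b' : Mon v → ℕ}
    (d : FreeMod v (PolyS k v) b' →ₗ[PolyS k v] FreeMod v (PolyS k v) b) : Prop :=
  ∀ p q, d (Finsupp.single p 1) q ∈
    Submodule.span k {x : PolyS k v | ∃ γ : Mon v, γ ≠ 0 ∧ γ + q.1.1 = p.1.1 ∧
      x = monomial γ 1}

/-- `b` is the system of multigraded Betti numbers of a minimal multigraded free
resolution of the residue field `k` over `A = S/𝔞`:
`⋯ → F_1 → F_0 = A → k → 0` with `F_i` having `b i α` generators in degree `α`.
Exactness at `F_0` says that the image of `d 0` is the maximal ideal of `A`. -/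
def IsMinResOfResidueField (𝔞 : Ideal (PolyS k v)) (b : ℕ → Mon v → ℕ) : Prop :=
  (∀ α, b 0 α = if α = 0 then 1 else 0) ∧
  ∃ (h0 : 0 < b 0 0)
    (d : ∀ i : ℕ, FreeMod v (PolyS k v ⧸ 𝔞) (b (i+1)) →ₗ[PolyS k v ⧸ 𝔞]
                    FreeMod v (PolyS k v ⧸ 𝔞) (b i)),
    (∀ i, IsGradedMinimalMapQ k v 𝔞 (d i)) ∧
    (∀ i, LinearMap.range (d (i+1)) = LinearMap.ker (d i)) ∧
    LinearMap.range (d 0) =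
      Submodule.comap (Finsupp.lapply (⟨((0 : Mon v), 0), h0⟩ : {p : Mon v × ℕ // p.2 < b 0 p.1}))
        (Ideal.map (Ideal.Quotient.mk 𝔞)
          (Ideal.span (Set.range (X : Fin v → PolyS k v))))

/-- `b` is the system of multigraded Betti numbers of a minimal multigraded free
resolution of `A = S/𝔞` over `S`:  `⋯ → F_1 → F_0 = S → S/𝔞 → 0`; exactness at
`F_0` says that the image of `d 0` is `𝔞`.  Thus `b i α = dim_k Tor_i^S(A,k)_α`. -/
def IsMinResOfQuotient (𝔞 : Ideal (PolyS k v)) (b : ℕ → Mon v → ℕ) : Prop :=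
  (∀ α, b 0 α = if α = 0 then 1 else 0) ∧
  ∃ (h0 : 0 < b 0 0)
    (d : ∀ i : ℕ, FreeMod v (PolyS k v) (b (i+1)) →ₗ[PolyS k v] FreeMod v (PolyS k v) (b i)),
    (∀ i, IsGradedMinimalMapS k v (d i)) ∧
    (∀ i, LinearMap.range (d (i+1)) = LinearMap.ker (d i)) ∧
    LinearMap.range (d 0) =
      Submodule.comap (Finsupp.lapply (⟨((0 : Mon v), 0), h0⟩ : {p : Mon v × ℕ // p.2 < b 0 p.1}))
        (𝔞 : Submodule (PolyS k v) (PolyS k v))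

/-- encode a pair (multidegree, `t`-degree) as an exponent vector for the
power-series ring in `x_1,…,x_v, t`. -/
def embMon (α : Mon v) (i : ℕ) : (Fin v ⊕ Unit) →₀ ℕ :=
  Finsupp.mapDomain Sum.inl α + Finsupp.single (Sum.inr ()) i

def decMon (e : (Fin v ⊕ Unit) →₀ ℕ) : Mon v :=
  Finsupp.comapDomain Sum.inl e Sum.inl_injective.injOn

def tdeg (e : (Fin v ⊕ Unit) →₀ ℕ) : ℕ := e (Sum.inr ())

/-- build a power series from its coefficient function. -/
def seriesOf (f : ((Fin v ⊕ Unit) →₀ ℕ) → ℚ) : MvPowerSeries (Fin v ⊕ Unit) ℚ := f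

/-- the multigraded Poincaré–Betti series `Σ_{i,α} b i α · x^α t^i`. -/
def PoinSeries (b : ℕ → Mon v → ℕ) : MvPowerSeries (Fin v ⊕ Unit) ℚ :=
  seriesOf v (fun e => (b (tdeg v e) (decMon v e) : ℚ))

/-- `Π_{i=1}^v (1 + x_i t)`. -/
def Numer : MvPowerSeries (Fin v ⊕ Unit) ℚ :=
  ∏ i : Fin v, (1 + MvPowerSeries.monomial (embMon v (Finsupp.single i 1) 1) (1 : ℚ))

open scoped Classical in
/-- the Golod denominator `1 - t Σ_{i,α} dim_k Tor_i^S(A,k)_α x^α t^i`. -/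
def GolodDenom (bS : ℕ → Mon v → ℕ) : MvPowerSeries (Fin v ⊕ Unit) ℚ :=
  seriesOf v (fun e =>
    if tdeg v e = 0 then (if e = 0 then 1 else 0) else -(bS (tdeg v e - 1) (decMon v e) : ℚ))

/-- `A = S/𝔞` is Golod:  `P^A_k(x,t) = Π (1+x_i t) / (1 - t Σ dim_k Tor_i^S(A,k)_α x^α t^i)`. -/
def IsGolod (𝔞 : Ideal (PolyS k v)) : Prop :=
  ∀ b bS, IsMinResOfResidueField k v 𝔞 b → IsMinResOfQuotient k v 𝔞 bS →
    PoinSeries v b * GolodDenom v bS = Numer v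

/-!
STATEMENT 9: Let `𝔞` be a monomial ideal generated in degree two (so `A = S/𝔞`
is Koszul).  Any subset `I` of the minimal generators appearing in the minimal
free resolution of `S/𝔞` over `S` (its Betti number in homological degree `|I|`
and multidegree `lcm(I)` is nonzero) with `cl(I) = 1` satisfies
`deg(lcm(I)) = |I| + 1`.  Consequently `cl(I) + |I| = deg(lcm(I))` for all
unmatched `I`, and hence `Hilb_R(x,t,-1) = Hilb_R(x,1,-t)` (stated as the
equality of the corresponding denominators
`1 + Σ_I (-1)^{|I|} m_I t^{‖m_I‖} = 1 + Σ_I (-1)^{|I|} m_I t^{cl(I)+|I|}`).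
-/

/-- `lcm` of a finite set of monomials. -/
def lcmF {v : ℕ} (I : Finset (Mon v)) : Mon v := I.sup id

/-- the number of equivalence classes of `I` under the transitive closure of
non-coprimality. -/
noncomputable def clM {v : ℕ} (I : Finset (Mon v)) : ℕ :=
  Nat.card ((SimpleGraph.fromRel
    (fun a b : I => ¬ Disjoint (a : Mon v).support (b : Mon v).support)).ConnectedComponent)

/-- `J` is one of the equivalence classes (connected components) of `I`. -/
noncomputable def IsComponent {v : ℕ} (J I : Finset (Mon v)) : Prop :=
  J ⊆ I ∧ J.Nonempty ∧ clM J = 1 ∧ Disjoint (lcmF J).support (lcmF (I \ J)).support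

/-- `I` appears in the minimal free resolution of `S/𝔞` over `S`: the Betti
number in homological degree `|I|` and multidegree `lcm(I)` is nonzero. -/
def BettiSupported (k : Type) [Field k] (v : ℕ) (𝔞 : Ideal (PolyS k v))
    (I : Finset (Mon v)) : Prop :=
  ∃ bS, IsMinResOfQuotient k v 𝔞 bS ∧ bS I.card (lcmF I) ≠ 0

/-!
Lower bound: in a minimal multigraded resolution every entry of a differential lies in the
maximal ideal, so a generator in homological degree `i + 1` has multidegree strictly above that
of some generator in homological degree `i`. As the generators in homological degree `1` are
quadrics, a generator in homological degree `i ≥ 1` has total degree at least `i + 1`.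

Upper bound: a set of quadrics whose non-coprimality graph is connected can be assembled one
monomial at a time, each new monomial sharing a variable with the lcm of those already chosen,
so every step raises the degree of the lcm by at most one.

For the second statement, split `I` into its components: their lcms have pairwise disjoint
supports, so both `deg lcm` and `|·|` add up over the components.
-/

open Finset

variable {k v}

section Degree

variable {σ : Type*}

theorem Finsupp.sup_add_inf (α β : σ →₀ ℕ) : α ⊔ β + α ⊓ β = α + β := by
  ext i
  simp only [Finsupp.coe_add, Pi.add_apply, Finsupp.sup_apply, Finsupp.inf_apply]
  exact max_add_min _ _

theorem Finsupp.degree_sup_add_degree_inf (α β : σ →₀ ℕ) :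
    (α ⊔ β).degree + (α ⊓ β).degree = α.degree + β.degree := by
  rw [← map_add, ← map_add, Finsupp.sup_add_inf]

theorem Finsupp.degree_sup_of_disjoint [DecidableEq σ] {α β : σ →₀ ℕ}
    (h : Disjoint α.support β.support) : (α ⊔ β).degree = α.degree + β.degree := by
  have hinf : α ⊓ β = 0 := by
    rw [← Finsupp.support_eq_empty, Finsupp.support_inf, ← Finset.disjoint_iff_inter_eq_empty]
    exact h
  simpa [hinf] using Finsupp.degree_sup_add_degree_inf α β

theorem Finsupp.degree_sup_lt_of_not_disjoint [DecidableEq σ] {α β : σ →₀ ℕ}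
    (h : ¬Disjoint α.support β.support) : (α ⊔ β).degree < α.degree + β.degree := by
  have hinf : (α ⊓ β).degree ≠ 0 := by
    rw [Ne, Finsupp.degree_eq_zero_iff, ← Finsupp.support_eq_empty, Finsupp.support_inf,
      ← Finset.disjoint_iff_inter_eq_empty]
    exact h
  have := Finsupp.degree_sup_add_degree_inf α β
  omega

theorem Finsupp.support_finset_sup [DecidableEq σ] {ι : Type*} [DecidableEq ι] (s : Finset ι)
    (f : ι → σ →₀ ℕ) : (s.sup f).support = s.biUnion fun i => (f i).support := by
  induction s using Finset.induction_on with
  | empty => simp [bot_eq_zero]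
  | insert a s _ ih => rw [sup_insert, Finsupp.support_sup, ih, biUnion_insert]

theorem Finsupp.degree_finset_sup [DecidableEq σ] {ι : Type*} [DecidableEq ι] (s : Finset ι)
    (f : ι → σ →₀ ℕ) (h : (s : Set ι).PairwiseDisjoint fun i => (f i).support) :
    (s.sup f).degree = ∑ i ∈ s, (f i).degree := by
  induction s using Finset.induction_on with
  | empty => simp [bot_eq_zero]
  | insert a s ha ih =>
    rw [Finset.coe_insert, Set.pairwiseDisjoint_insert_of_notMem (by exact_mod_cast ha)] at h
    rw [sup_insert, sum_insert ha, ← ih h.1, Finsupp.degree_sup_of_disjoint]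
    rw [Finsupp.support_finset_sup, disjoint_biUnion_right]
    exact fun i hi => h.2 i hi

end Degree

section Lcm

theorem le_lcmF {I : Finset (Mon v)} {a : Mon v} (ha : a ∈ I) : a ≤ lcmF I :=
  le_sup (f := id) ha

theorem support_lcmF (I : Finset (Mon v)) : (lcmF I).support = I.biUnion Finsupp.support :=
  Finsupp.support_finset_sup I id

theorem degree_lcmF_insert_lt {I : Finset (Mon v)} {m : Mon v}
    (h : ¬Disjoint m.support (lcmF I).support) :
    (lcmF (insert m I)).degree < m.degree + (lcmF I).degree := by
  rw [lcmF, sup_insert]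
  exact Finsupp.degree_sup_lt_of_not_disjoint h

end Lcm

section Graph

abbrev overlapGraph (I : Finset (Mon v)) : SimpleGraph I :=
  SimpleGraph.fromRel fun a b : I => ¬Disjoint (a : Mon v).support (b : Mon v).support

theorem overlapGraph_adj {I : Finset (Mon v)} {a b : I} :
    (overlapGraph I).Adj a b ↔
      a ≠ b ∧ ¬Disjoint (a : Mon v).support (b : Mon v).support := by
  rw [SimpleGraph.fromRel_adj, disjoint_comm, or_self]

theorem clM_eq_one_iff {I : Finset (Mon v)} : clM I = 1 ↔ (overlapGraph I).Connected := by
  rw [clM, Nat.card_eq_one_iff_unique, SimpleGraph.connected_iff]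
  refine ⟨fun ⟨_, ⟨C⟩⟩ => ⟨fun a b => ?_, ?_⟩, fun ⟨h, ⟨a⟩⟩ =>
    ⟨h.subsingleton_connectedComponent, ⟨(overlapGraph I).connectedComponentMk a⟩⟩⟩
  · exact SimpleGraph.ConnectedComponent.exact (Subsingleton.elim _ _)
  · obtain ⟨a, -⟩ := C.exists_rep
    exact ⟨a⟩

theorem exists_not_disjoint_lcmF_of_connected {I J : Finset (Mon v)}
    (hI : (overlapGraph I).Connected) (hJI : J ⊆ I) (hJ : J.Nonempty) (hJne : J ≠ I) :
    ∃ m ∈ I, m ∉ J ∧ ¬Disjoint m.support (lcmF J).support := by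
  obtain ⟨a, ha⟩ := hJ
  obtain ⟨b, hbI, hbJ⟩ := exists_of_ssubset (hJI.ssubset_of_ne hJne)
  obtain ⟨d, -, hd₁, hd₂⟩ :=
    (hI.preconnected ⟨a, hJI ha⟩ ⟨b, hbI⟩).some.exists_boundary_dart {x | x.1 ∈ J} ha hbJ
  refine ⟨d.snd.1, d.snd.2, hd₂, fun hdisj => (overlapGraph_adj.1 d.adj).2 ?_⟩
  exact (hdisj.mono_right (Finsupp.support_mono (le_lcmF hd₁))).symm

theorem degree_lcmF_le_card_add_one {I : Finset (Mon v)} (hdeg : ∀ m ∈ I, m.degree ≤ 2)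
    (hI : (overlapGraph I).Connected) : (lcmF I).degree ≤ #I + 1 := by
  have grow : ∀ n < #I, ∃ J ⊆ I, #J = n + 1 ∧ (lcmF J).degree ≤ n + 2 := by
    intro n
    induction n with
    | zero =>
      intro _
      obtain ⟨⟨a, ha⟩⟩ := hI.nonempty
      refine ⟨{a}, singleton_subset_iff.2 ha, card_singleton a, ?_⟩
      simpa [lcmF] using hdeg a ha
    | succ n ih =>
      intro hn
      obtain ⟨J, hJI, hJ, hdegJ⟩ := ih (by omega)
      obtain ⟨m, hmI, hmJ, hm⟩ := exists_not_disjoint_lcmF_of_connected hI hJI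
        (card_pos.1 (by omega)) (by rintro rfl; omega)
      refine ⟨insert m J, insert_subset hmI hJI, by rw [card_insert_of_notMem hmJ, hJ], ?_⟩
      have := degree_lcmF_insert_lt hm
      have := hdeg m hmI
      omega
  obtain ⟨⟨a, ha⟩⟩ := hI.nonempty
  have hIpos : 0 < #I := card_pos.2 ⟨a, ha⟩
  obtain ⟨J, hJI, hJ, hdegJ⟩ := grow (#I - 1) (by omega)
  obtain rfl : J = I := eq_of_subset_of_card_le hJI (by omega)
  omega

end Graph

section Components

variable {I : Finset (Mon v)}

open Classical in
def componentFinset (C : (overlapGraph I).ConnectedComponent) : Finset (Mon v) :=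
  {a ∈ I | ∃ h : a ∈ I, (overlapGraph I).connectedComponentMk ⟨a, h⟩ = C}

open Classical in
theorem mem_componentFinset {C : (overlapGraph I).ConnectedComponent} {a : Mon v} :
    a ∈ componentFinset C ↔
      ∃ h : a ∈ I, (overlapGraph I).connectedComponentMk ⟨a, h⟩ = C := by
  rw [componentFinset, mem_filter, and_iff_right_iff_imp]
  exact fun ⟨h, _⟩ => h

theorem componentFinset_subset (C : (overlapGraph I).ConnectedComponent) :
    componentFinset C ⊆ I :=
  fun _ ha => (mem_componentFinset.1 ha).1

theorem connected_overlapGraph_componentFinset (C : (overlapGraph I).ConnectedComponent) :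
    (overlapGraph (componentFinset C)).Connected := by
  let f : C.toSimpleGraph →g overlapGraph (componentFinset C) :=
    { toFun := fun x => ⟨x.1.1, mem_componentFinset.2 ⟨x.1.2, x.2⟩⟩
      map_rel' := fun {x y} hxy => by
        change (overlapGraph I).Adj x.1 y.1 at hxy
        rw [overlapGraph_adj] at hxy
        rw [overlapGraph_adj]
        exact ⟨fun h => hxy.1 (Subtype.ext (by simpa using h)), hxy.2⟩ }
  refine C.connected_toSimpleGraph.map f fun a => ?_
  obtain ⟨ha, hC⟩ := mem_componentFinset.1 a.2
  exact ⟨⟨⟨a.1, ha⟩, hC⟩, rfl⟩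

theorem disjoint_support_lcmF_componentFinset (C : (overlapGraph I).ConnectedComponent) :
    Disjoint (lcmF (componentFinset C)).support (lcmF (I \ componentFinset C)).support := by
  rw [support_lcmF, support_lcmF, disjoint_biUnion_left]
  intro a ha
  rw [disjoint_biUnion_right]
  intro b hb
  obtain ⟨haI, rfl⟩ := mem_componentFinset.1 ha
  obtain ⟨hbI, hbC⟩ := mem_sdiff.1 hb
  by_contra hab
  refine hbC (mem_componentFinset.2 ⟨hbI, (SimpleGraph.ConnectedComponent.sound ?_).symm⟩)
  refine SimpleGraph.Adj.reachable (overlapGraph_adj.2 ⟨?_, hab⟩)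
  rintro ⟨⟩
  exact hbC ha

theorem isComponent_componentFinset (C : (overlapGraph I).ConnectedComponent) :
    IsComponent (componentFinset C) I := by
  refine ⟨componentFinset_subset C, ?_,
    clM_eq_one_iff.2 (connected_overlapGraph_componentFinset C),
    disjoint_support_lcmF_componentFinset C⟩
  obtain ⟨a, rfl⟩ := C.exists_rep
  exact ⟨a.1, mem_componentFinset.2 ⟨a.2, rfl⟩⟩

theorem biUnion_componentFinset (I : Finset (Mon v))
    [Fintype (overlapGraph I).ConnectedComponent] :
    univ.biUnion (componentFinset (I := I)) = I := by
  ext a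
  simp only [mem_biUnion, mem_univ, true_and]
  exact ⟨fun ⟨C, ha⟩ => componentFinset_subset C ha,
    fun ha => ⟨_, mem_componentFinset.2 ⟨ha, rfl⟩⟩⟩

open Function in
theorem pairwise_disjoint_componentFinset (I : Finset (Mon v)) :
    Pairwise (Disjoint on (componentFinset (I := I))) := by
  intro C D hCD
  rw [onFun, disjoint_left]
  intro a haC haD
  exact hCD ((mem_componentFinset.1 haC).2.symm.trans (mem_componentFinset.1 haD).2)

theorem degree_lcmF_eq_clM_add_card {I : Finset (Mon v)}
    (h : ∀ J, IsComponent J I → (lcmF J).degree = #J + 1) : (lcmF I).degree = clM I + #I := by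
  classical
  have hdisj := pairwise_disjoint_componentFinset I
  calc (lcmF I).degree
    _ = ∑ C : (overlapGraph I).ConnectedComponent, (lcmF (componentFinset C)).degree := by
        conv_lhs => rw [← biUnion_componentFinset I, lcmF, sup_biUnion]
        refine Finsupp.degree_finset_sup univ (lcmF ∘ componentFinset) fun C _ D _ hCD => ?_
        refine (disjoint_support_lcmF_componentFinset C).mono_right (Finsupp.support_mono ?_)
        exact sup_mono (subset_sdiff.2 ⟨componentFinset_subset D, (hdisj hCD).symm⟩)
    _ = ∑ C, (#(componentFinset C) + 1) :=
        sum_congr rfl fun C _ => h _ (isComponent_componentFinset C)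
    _ = clM I + #I := by
        rw [sum_add_distrib, ← card_biUnion (hdisj.set_pairwise _), biUnion_componentFinset,
          sum_const, smul_eq_mul, mul_one, card_univ, clM, Nat.card_eq_fintype_card, add_comm]

end Components

section Resolution

variable {b b' : Mon v → ℕ}

theorem IsGradedMinimalMapS.constantCoeff_apply
    {d : FreeMod v (PolyS k v) b' →ₗ[PolyS k v] FreeMod v (PolyS k v) b}
    (hd : IsGradedMinimalMapS k v d) (x : FreeMod v (PolyS k v) b') (q) :
    constantCoeff (d x q) = 0 := by
  induction x using Finsupp.induction_linear with
  | zero => simp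
  | add x y hx hy => simp [hx, hy]
  | single p c =>
    have hentry : constantCoeff (d (Finsupp.single p 1) q) = 0 := by
      refine Submodule.span_induction ?_ (map_zero _)
        (fun x y _ _ hx hy => by rw [map_add, hx, hy, add_zero])
        (fun a x _ hx => by rw [constantCoeff_smul, hx, smul_zero]) (hd p q)
      rintro _ ⟨γ, hγ, -, rfl⟩
      rw [constantCoeff_monomial, if_neg hγ]
    rw [← mul_one c, ← smul_eq_mul, ← Finsupp.smul_single, map_smul, Finsupp.smul_apply,
      smul_eq_mul, map_mul, hentry, mul_zero]

theorem IsGradedMinimalMapS.exists_add_eq_of_apply_ne_zero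
    {d : FreeMod v (PolyS k v) b' →ₗ[PolyS k v] FreeMod v (PolyS k v) b}
    (hd : IsGradedMinimalMapS k v d) {p q} (hpq : d (Finsupp.single p 1) q ≠ 0) :
    ∃ γ : Mon v, γ ≠ 0 ∧ γ + q.1.1 = p.1.1 := by
  by_contra! hγ
  have hempty : {x : PolyS k v | ∃ γ : Mon v, γ ≠ 0 ∧ γ + q.1.1 = p.1.1 ∧
      x = monomial γ 1} = ∅ :=
    Set.eq_empty_of_forall_notMem fun _ ⟨γ, hγ0, hγq, _⟩ => hγ γ hγ0 hγq
  have := hd p q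
  rw [hempty, Submodule.span_empty, Submodule.mem_bot] at this
  exact hpq this

theorem IsGradedMinimalMapS.apply_single_ne_zero {b'' : Mon v → ℕ}
    {d : FreeMod v (PolyS k v) b' →ₗ[PolyS k v] FreeMod v (PolyS k v) b}
    {d' : FreeMod v (PolyS k v) b'' →ₗ[PolyS k v] FreeMod v (PolyS k v) b'}
    (hd' : IsGradedMinimalMapS k v d') (hex : LinearMap.range d' = LinearMap.ker d) (p) :
    d (Finsupp.single p 1) ≠ 0 := by
  intro h0
  obtain ⟨x, hx⟩ : Finsupp.single p 1 ∈ LinearMap.range d' := hex ▸ LinearMap.mem_ker.2 h0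
  have := hd'.constantCoeff_apply x p
  rw [hx, Finsupp.single_eq_same, map_one] at this
  exact one_ne_zero this

variable {𝔞 : Ideal (PolyS k v)} {bS : ℕ → Mon v → ℕ}

theorem IsMinResOfQuotient.exists_degree_lt (h : IsMinResOfQuotient k v 𝔞 bS) {i : ℕ}
    {α : Mon v} (hα : bS (i + 1) α ≠ 0) : ∃ β, bS i β ≠ 0 ∧ β.degree < α.degree := by
  obtain ⟨-, -, d, hmin, hex, -⟩ := h
  let p : {p : Mon v × ℕ // p.2 < bS (i + 1) p.1} := ⟨(α, 0), Nat.pos_of_ne_zero hα⟩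
  obtain ⟨q, hq⟩ := Finsupp.ne_iff.1 ((hmin (i + 1)).apply_single_ne_zero (hex i) p)
  obtain ⟨γ, hγ, hγq⟩ := (hmin i).exists_add_eq_of_apply_ne_zero hq
  refine ⟨q.1.1, by have := q.2; omega, ?_⟩
  have hγdeg : γ.degree ≠ 0 := (Finsupp.degree_eq_zero_iff γ).not.2 hγ
  have : α.degree = γ.degree + q.1.1.degree := by rw [← map_add, hγq]
  omega

theorem IsMinResOfQuotient.monomial_mem (h : IsMinResOfQuotient k v 𝔞 bS) {α : Mon v}
    (hα : bS 1 α ≠ 0) : monomial α (1 : k) ∈ 𝔞 := by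
  obtain ⟨hb0, h0, d, hmin, hex, hrange⟩ := h
  let p : {p : Mon v × ℕ // p.2 < bS (0 + 1) p.1} := ⟨(α, 0), Nat.pos_of_ne_zero hα⟩
  obtain ⟨q, hq⟩ := Finsupp.ne_iff.1 ((hmin 1).apply_single_ne_zero (hex 0) p)
  -- `F_0 = S` has its only basis element in multidegree `0`, so the entry `q` is `c • x^α`.
  have hq0 : q.1.1 = 0 := by
    by_contra hne
    have := q.2
    rw [hb0, if_neg hne] at this
    omega
  have hmem : d 0 (Finsupp.single p 1) q ∈ 𝔞 := by
    have hq_eq : q = ⟨(0, 0), h0⟩ := by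
      have hq2 : q.1.2 < bS 0 q.1.1 := q.2
      rw [hb0, if_pos hq0] at hq2
      exact Subtype.ext (Prod.ext hq0 (Nat.lt_one_iff.1 hq2))
    have := hrange ▸ LinearMap.mem_range_self (d 0) (Finsupp.single p 1)
    rw [hq_eq]
    exact this
  have hspan : d 0 (Finsupp.single p 1) q ∈ Submodule.span k {monomial α 1} := by
    refine Submodule.span_mono ?_ (hmin 0 p q)
    rintro _ ⟨γ, -, hγ, rfl⟩
    rw [hq0, add_zero] at hγ
    rw [hγ]
    rfl
  obtain ⟨c, hc⟩ := Submodule.mem_span_singleton.1 hspan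
  have hc0 : c ≠ 0 := by
    rintro rfl
    exact hq (by rw [← hc, zero_smul]; rfl)
  rw [← hc] at hmem
  exact (Submodule.smul_mem_iff 𝔞 hc0).1 hmem

theorem IsMinResOfQuotient.le_degree (h : IsMinResOfQuotient k v 𝔞 bS) {r : ℕ}
    (h𝔞 : ∀ α : Mon v, monomial α (1 : k) ∈ 𝔞 → r ≤ α.degree) {n : ℕ}
    {α : Mon v} (hα : bS (n + 1) α ≠ 0) : n + r ≤ α.degree := by
  induction n generalizing α with
  | zero => simpa using h𝔞 α (h.monomial_mem hα)
  | succ n ih =>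
    obtain ⟨β, hβ, hlt⟩ := h.exists_degree_lt hα
    have := ih hβ
    omega

theorem le_degree_of_monomial_mem_span {G : Set (Mon v)} {r : ℕ}
    (hG : ∀ m ∈ G, r ≤ m.degree) {α : Mon v}
    (hα : monomial α (1 : k) ∈ Ideal.span ((fun α => (monomial α 1 : PolyS k v)) '' G)) :
    r ≤ α.degree := by
  obtain ⟨m, hm, hle⟩ := mem_ideal_span_monomial_image.1 hα α (by simp)
  exact (hG m hm).trans (Finsupp.degree_mono hle)

end Resolution

theorem koszul_degree_of_unmatched_general (k : Type) [Field k] (v : ℕ)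
    (G : Finset (Mon v))
    (hdeg : ∀ m ∈ G, m.sum (fun _ e => e) = 2)
    (𝔞 : Ideal (PolyS k v))
    (h𝔞 : 𝔞 = Ideal.span ((fun α => (monomial α (1 : k) : PolyS k v)) '' (G : Set (Mon v)))) :
    -- (1) unmatched sets with cl = 1 have degree |I| + 1 :
    (∀ I : Finset (Mon v), I ⊆ G → I.Nonempty → clM I = 1 →
      BettiSupported k v 𝔞 I → (lcmF I).sum (fun _ e => e) = I.card + 1) ∧
    -- (2) consequently cl(I) + |I| = deg(lcm(I)) for all unmatched I :
    (∀ I : Finset (Mon v), I ⊆ G → I.Nonempty →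
      (∀ J, IsComponent J I → BettiSupported k v 𝔞 J) →
      (lcmF I).sum (fun _ e => e) = clM I + I.card) ∧
    -- (3) hence Hilb_R(x,t,-1) = Hilb_R(x,1,-t) :
    (∀ Uset : Finset (Finset (Mon v)),
      (∀ I ∈ Uset, I ⊆ G ∧ I.Nonempty ∧ ∀ J, IsComponent J I → BettiSupported k v 𝔞 J) →
      (1 + ∑ I ∈ Uset, MvPowerSeries.monomial
          (embMon v (lcmF I) ((lcmF I).sum (fun _ e => e))) ((-1 : ℚ) ^ I.card)) =
      (1 + ∑ I ∈ Uset, MvPowerSeries.monomial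
          (embMon v (lcmF I) (clM I + I.card)) ((-1 : ℚ) ^ I.card))) := by
  have hdeg : ∀ m ∈ G, m.degree = 2 := hdeg
  have hgen : ∀ α : Mon v, monomial α (1 : k) ∈ 𝔞 → 2 ≤ α.degree := fun α hα =>
    le_degree_of_monomial_mem_span (fun m hm => (hdeg m hm).ge) (h𝔞 ▸ hα)
  have degree_of_cl_one : ∀ I ⊆ G, I.Nonempty → clM I = 1 → BettiSupported k v 𝔞 I →
      (lcmF I).degree = #I + 1 := by
    rintro I hIG hI hcl ⟨bS, hres, hb⟩
    have hlower := hres.le_degree hgen (n := #I - 1) (by rwa [Nat.sub_add_cancel hI.card_pos])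
    have hupper := degree_lcmF_le_card_add_one (fun m hm => (hdeg m (hIG hm)).le)
      (clM_eq_one_iff.1 hcl)
    omega
  have degree_eq_cl_add_card : ∀ I ⊆ G, (∀ J, IsComponent J I → BettiSupported k v 𝔞 J) →
      (lcmF I).degree = clM I + #I := fun I hIG hB =>
    degree_lcmF_eq_clM_add_card fun J hJ =>
      degree_of_cl_one J (hJ.1.trans hIG) hJ.2.1 hJ.2.2.1 (hB J hJ)
  refine ⟨degree_of_cl_one, fun I hIG _ => degree_eq_cl_add_card I hIG, fun U hU => ?_⟩
  congr 1
  refine sum_congr rfl fun I hI => ?_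
  obtain ⟨hIG, -, hB⟩ := hU I hI
  rw [show (lcmF I).sum (fun _ e => e) = clM I + #I from degree_eq_cl_add_card I hIG hB]

theorem koszul_degree_of_unmatched (k : Type) [Field k] (v : ℕ)
    (G : Finset (Mon v))
    (hdeg : ∀ m ∈ G, m.sum (fun _ e => e) = 2)
    (hmin : ∀ m ∈ G, ∀ u ∈ G, u ≤ m → u = m)
    (𝔞 : Ideal (PolyS k v))
    (h𝔞 : 𝔞 = Ideal.span ((fun α => (monomial α (1 : k) : PolyS k v)) '' (G : Set (Mon v)))) :
    -- (1) unmatched sets with cl = 1 have degree |I| + 1 :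
    (∀ I : Finset (Mon v), I ⊆ G → I.Nonempty → clM I = 1 →
      BettiSupported k v 𝔞 I → (lcmF I).sum (fun _ e => e) = I.card + 1) ∧
    -- (2) consequently cl(I) + |I| = deg(lcm(I)) for all unmatched I :
    (∀ I : Finset (Mon v), I ⊆ G → I.Nonempty →
      (∀ J, IsComponent J I → BettiSupported k v 𝔞 J) →
      (lcmF I).sum (fun _ e => e) = clM I + I.card) ∧
    -- (3) hence Hilb_R(x,t,-1) = Hilb_R(x,1,-t) :
    (∀ Uset : Finset (Finset (Mon v)),
      (∀ I ∈ Uset, I ⊆ G ∧ I.Nonempty ∧ ∀ J, IsComponent J I → BettiSupported k v 𝔞 J) →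
      (1 + ∑ I ∈ Uset, MvPowerSeries.monomial
          (embMon v (lcmF I) ((lcmF I).sum (fun _ e => e))) ((-1 : ℚ) ^ I.card)) =
      (1 + ∑ I ∈ Uset, MvPowerSeries.monomial
          (embMon v (lcmF I) (clM I + I.card)) ((-1 : ℚ) ^ I.card))) :=
  koszul_degree_of_unmatched_general k v G hdeg 𝔞 h𝔞
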